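/- arXiv:1804.01679 — 4 statements merged into one kernel-verified Lean document; each statement's English description precedes it below -/
import Mathlib

section
/- Let f : ℝ → ℂ be continuously differentiable on [0,∞). Assume that x ↦ f(x)/cosh²(πx) and x ↦ f'(x)/(e^{2πx}+1) are integrable on (0,∞), and that f(x)·e^{−2πx} → 0 as x → ∞. Then ∫_0^∞ f(x)/cosh²(πx) dx = f(0)/π + (2/π) · ∫_0^∞ f'(x)/(e^{2πx}+1) dx. -/
open Complex MeasureTheory Real Filter

/-!
Since `tanh' = 1 / cosh²`, the function `x ↦ (tanh (π x) - 1) / π = -(2/π) / (e^{2πx} + 1)` is a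
primitive of `1 / cosh² (π x)` vanishing at `+∞` like `e^{-2πx}` and equal to `-1/π` at `0`.
Integrating by parts against it, the boundary term at `0` gives `f 0 / π`, the one at `∞` vanishes
by the growth hypothesis on `f`, and the remaining integral is the one with `f'`.
-/

noncomputable def sechSqPrimitive (a x : ℝ) : ℝ := -(2 / a) * (Real.exp (2 * a * x) + 1)⁻¹

lemma four_mul_exp_two_mul_mul_cosh_sq (y : ℝ) :
    4 * Real.exp (2 * y) * Real.cosh y ^ 2 = (Real.exp (2 * y) + 1) ^ 2 := by
  have := Real.exp_ne_zero y
  rw [Real.cosh_eq, Real.exp_neg, two_mul, Real.exp_add]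
  field_simp
  ring

lemma hasDerivAt_sechSqPrimitive {a : ℝ} (ha : a ≠ 0) (x : ℝ) :
    HasDerivAt (sechSqPrimitive a) (Real.cosh (a * x) ^ 2)⁻¹ x := by
  have hE : HasDerivAt (fun x => Real.exp (2 * a * x) + 1)
      (Real.exp (2 * a * x) * (2 * a)) x := by
    simpa using (((hasDerivAt_id x).const_mul (2 * a)).exp).add_const 1
  have hpos : Real.exp (2 * a * x) + 1 ≠ 0 := by positivity
  refine ((hE.inv hpos).const_mul (-(2 / a))).congr_deriv ?_
  have hid := four_mul_exp_two_mul_mul_cosh_sq (a * x)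
  rw [← mul_assoc] at hid
  rw [← hid]
  have := (Real.cosh_pos (a * x)).ne'
  field_simp
  ring

lemma sechSqPrimitive_zero (a : ℝ) : sechSqPrimitive a 0 = -a⁻¹ := by
  norm_num [sechSqPrimitive]

lemma abs_sechSqPrimitive_le (a x : ℝ) :
    |sechSqPrimitive a x| ≤ 2 / |a| * Real.exp (-(2 * a * x)) := by
  rw [sechSqPrimitive, abs_mul, abs_neg, abs_div, abs_two, Real.exp_neg,
    abs_of_pos (by positivity : 0 < (Real.exp (2 * a * x) + 1)⁻¹)]
  gcongr
  linarith

lemma tendsto_mul_sechSqPrimitive_atTop {a : ℝ} {g : ℝ → ℂ}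
    (hg : Tendsto (fun x => g x * (Real.exp (-(2 * a * x)) : ℂ)) atTop (nhds 0)) :
    Tendsto (fun x => g x * (sechSqPrimitive a x : ℂ)) atTop (nhds 0) := by
  refine squeeze_zero_norm (fun x => ?_)
    (by simpa only [norm_zero, mul_zero] using hg.norm.const_mul (2 / |a|))
  rw [norm_mul, norm_mul, Complex.norm_real, Complex.norm_real, Real.norm_eq_abs,
    Real.norm_of_nonneg (Real.exp_pos _).le, mul_left_comm]
  gcongr
  exact abs_sechSqPrimitive_le a x

theorem integral_sech_sq_eq_integration_by_parts_general (f f' : ℝ → ℂ)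
    (hderiv : ∀ x ∈ Set.Ici (0 : ℝ), HasDerivWithinAt f (f' x) (Set.Ici 0) x)
    (hint1 : IntegrableOn (fun x : ℝ => f x / ((Real.cosh (Real.pi * x) : ℂ)) ^ 2)
      (Set.Ioi 0))
    (hint2 : IntegrableOn (fun x : ℝ => f' x / ((Real.exp (2 * Real.pi * x) : ℂ) + 1))
      (Set.Ioi 0))
    (hlim : Tendsto (fun x : ℝ => f x * (Real.exp (-(2 * Real.pi * x)) : ℂ)) atTop (nhds 0)) :
    ∫ x in Set.Ioi (0 : ℝ), f x / ((Real.cosh (Real.pi * x) : ℂ)) ^ 2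
      = f 0 / (Real.pi : ℂ) +
        (2 / (Real.pi : ℂ)) *
          ∫ x in Set.Ioi (0 : ℝ), f' x / ((Real.exp (2 * Real.pi * x) : ℂ) + 1) := by
  set v : ℝ → ℂ := fun x => (sechSqPrimitive π x : ℂ)
  have hu (x : ℝ) (hx : x ∈ Set.Ioi 0) : HasDerivAt f (f' x) x :=
    (hderiv x (le_of_lt hx)).hasDerivAt (Ici_mem_nhds hx)
  have hv (x : ℝ) : HasDerivAt v (((Real.cosh (π * x) ^ 2)⁻¹ : ℝ) : ℂ) x :=
    (hasDerivAt_sechSqPrimitive pi_ne_zero x).ofReal_comp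
  have h_sech_integrand (x : ℝ) :
      f x * (((Real.cosh (π * x) ^ 2)⁻¹ : ℝ) : ℂ) = f x / (Real.cosh (π * x) : ℂ) ^ 2 := by
    push_cast; rfl
  have h_exp_integrand (x : ℝ) :
      f' x * v x = -(2 / (π : ℂ)) * (f' x / ((Real.exp (2 * π * x) : ℂ) + 1)) := by
    simp only [v, sechSqPrimitive]; push_cast; ring
  have h_zero : Tendsto (f * v) (nhdsWithin 0 (Set.Ioi 0)) (nhds (f 0 * v 0)) :=
    ((hderiv 0 Set.self_mem_Ici).continuousWithinAt.mul
      (hv 0).continuousAt.continuousWithinAt).mono_left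
      (nhdsWithin_mono 0 Set.Ioi_subset_Ici_self)
  have h_parts := integral_Ioi_mul_deriv_eq_deriv_mul hu (fun x _ => hv x)
    (hint1.congr_fun (fun x _ => (h_sech_integrand x).symm) measurableSet_Ioi)
    (IntegrableOn.congr_fun (hint2.const_mul _) (fun x _ => (h_exp_integrand x).symm) measurableSet_Ioi)
    h_zero (tendsto_mul_sechSqPrimitive_atTop hlim)
  simp only [h_sech_integrand, h_exp_integrand, integral_const_mul] at h_parts
  rw [h_parts]
  simp only [v, sechSqPrimitive_zero]
  push_cast
  ring

/-- Integration by parts: if `f : ℝ → ℂ` is continuously differentiable on `[0,∞)`,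
the functions `f(x)/cosh²(πx)` and `f'(x)/(e^{2πx}+1)` are integrable on `(0,∞)`,
and `f(x) e^{−2πx} → 0` as `x → ∞`, then
`∫_0^∞ f(x)/cosh²(πx) dx = f(0)/π + (2/π) ∫_0^∞ f'(x)/(e^{2πx}+1) dx`. -/
theorem integral_sech_sq_eq_integration_by_parts (f f' : ℝ → ℂ)
    (hderiv : ∀ x ∈ Set.Ici (0 : ℝ), HasDerivWithinAt f (f' x) (Set.Ici 0) x)
    (hcont : ContinuousOn f' (Set.Ici 0))
    (hint1 : IntegrableOn (fun x : ℝ => f x / ((Real.cosh (Real.pi * x) : ℂ)) ^ 2)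
      (Set.Ioi 0))
    (hint2 : IntegrableOn (fun x : ℝ => f' x / ((Real.exp (2 * Real.pi * x) : ℂ) + 1))
      (Set.Ioi 0))
    (hlim : Tendsto (fun x : ℝ => f x * (Real.exp (-(2 * Real.pi * x)) : ℂ)) atTop (nhds 0)) :
    ∫ x in Set.Ioi (0 : ℝ), f x / ((Real.cosh (Real.pi * x) : ℂ)) ^ 2
      = f 0 / (Real.pi : ℂ) +
        (2 / (Real.pi : ℂ)) *
          ∫ x in Set.Ioi (0 : ℝ), f' x / ((Real.exp (2 * Real.pi * x) : ℂ) + 1) :=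
  integral_sech_sq_eq_integration_by_parts_general f f' hderiv hint1 hint2 hlim
end

section
/- Let a ∈ ℂ with Re(a) > 0, let n ∈ ℕ, and let N ∈ ℝ with N ≥ n + 2 + |Im(a)|. Then the tail integral T_N = ∫_N^∞ (log(a + ix))^{n+1} / cosh²(πx) dx satisfies ‖T_N‖ < 0.934 · e^{−2πN} · ‖log(a + Ni)‖^{n+1}. -/
/-!
On the ray `x ≥ N` the point `a + ix` stays at distance at least `n + 2` from the origin,
so `x ↦ log (a + ix)` is `1/(n+2)`-Lipschitz there and `‖log (a + ix)‖ ≤ L + (x - N)/(n+2)`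
with `L = ‖log (a + Ni)‖ ≥ log 2 > 2/3`. Raising to the power `n + 1` and using
`1 + u ≤ eᵘ`, the numerator grows at most like `L^{n+1} e^{3(x-N)/2}`, while
`cosh² (πx) ≥ e^{2πx}/4`. Integrating this exponential majorant gives the constant
`4 / (2π - 3/2) < 0.934`.
-/

open Complex MeasureTheory Real Set

namespace Real

lemma exp_two_mul_le_four_mul_cosh_sq (y : ℝ) : exp (2 * y) ≤ 4 * cosh y ^ 2 := by
  have h : exp y ≤ 2 * cosh y := by rw [cosh_eq]; linarith [exp_pos (-y)]
  calc exp (2 * y) = exp y ^ 2 := by rw [← exp_nat_mul]; norm_num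
    _ ≤ (2 * cosh y) ^ 2 := pow_le_pow_left₀ (exp_pos y).le h 2
    _ = 4 * cosh y ^ 2 := by ring

lemma add_pow_le_pow_mul_exp {L s : ℝ} (hL : 0 < L) (hs : 0 ≤ s) (m : ℕ) :
    (L + s) ^ m ≤ L ^ m * exp (m * s / L) := by
  calc (L + s) ^ m = L ^ m * (1 + s / L) ^ m := by rw [← mul_pow]; field_simp
    _ ≤ L ^ m * exp (s / L) ^ m := by gcongr; linarith [add_one_le_exp (s / L)]
    _ = L ^ m * exp (m * s / L) := by rw [← exp_nat_mul, mul_div_assoc]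

end Real

lemma norm_setIntegral_Ioi_le_of_norm_le_mul_exp {E : Type*} [NormedAddCommGroup E]
    [NormedSpace ℝ E] {f : ℝ → E} {C k N : ℝ} (hk : 0 < k)
    (hf : ∀ x ∈ Ioi N, ‖f x‖ ≤ C * Real.exp (-k * x)) :
    ‖∫ x in Ioi N, f x‖ ≤ C * Real.exp (-k * N) / k := by
  have hint : IntegrableOn (fun x => C * Real.exp (-k * x)) (Ioi N) :=
    (exp_neg_integrableOn_Ioi N hk).const_mul C
  calc ‖∫ x in Ioi N, f x‖ ≤ ∫ x in Ioi N, C * Real.exp (-k * x) :=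
        norm_integral_le_of_norm_le hint
          ((ae_restrict_iff' measurableSet_Ioi).mpr (.of_forall hf))
    _ = C * Real.exp (-k * N) / k := by
        rw [integral_const_mul, integral_exp_mul_Ioi (by linarith)]
        field_simp

namespace Complex

lemma le_norm_add_I_mul {a : ℂ} {c t : ℝ} (h : c + |a.im| ≤ t) : c ≤ ‖a + I * t‖ := by
  have him : (a + I * t).im = a.im + t := by simp
  linarith [him ▸ im_le_norm (a + I * t), neg_abs_le a.im]

lemma two_div_three_lt_norm_log {z : ℂ} (hz : 2 ≤ ‖z‖) : 2 / 3 < ‖log z‖ :=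
  calc (2 : ℝ) / 3 < Real.log 2 := by linarith [Real.log_two_gt_d9]
    _ ≤ Real.log ‖z‖ := Real.log_le_log two_pos hz
    _ = (log z).re := (log_re z).symm
    _ ≤ ‖log z‖ := re_le_norm _

lemma norm_log_add_I_mul_le {a : ℂ} (ha : 0 < a.re) {m N x : ℝ} (hm : 0 < m) (hNx : N ≤ x)
    (hfar : ∀ t ∈ Ico N x, m ≤ ‖a + I * t‖) :
    ‖log (a + I * x)‖ ≤ ‖log (a + I * N)‖ + (x - N) / m := by
  have hderiv : ∀ t ∈ Icc N x, HasDerivWithinAt (fun t : ℝ => log (a + I * t))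
      ((a + I * t)⁻¹ * I) (Icc N x) t := by
    intro t _
    have hslit : a + I * t ∈ slitPlane := Or.inl (by simpa using ha)
    have h := (((hasDerivAt_id (t : ℂ)).const_mul I).const_add a).clog hslit
    rw [mul_one, div_eq_inv_mul] at h
    exact h.comp_ofReal.hasDerivWithinAt
  have hlip := norm_image_sub_le_of_norm_deriv_le_segment' hderiv (C := m⁻¹)
    (fun t ht => by rw [norm_mul, norm_I, mul_one, norm_inv]; exact inv_anti₀ hm (hfar t ht))
    x ⟨hNx, le_rfl⟩
  calc ‖log (a + I * x)‖
      ≤ ‖log (a + I * N)‖ + ‖log (a + I * x) - log (a + I * N)‖ := norm_le_insert' _ _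
    _ ≤ ‖log (a + I * N)‖ + (x - N) / m := by rw [div_eq_inv_mul]; gcongr

lemma norm_log_add_I_mul_pow_le {a : ℂ} (ha : 0 < a.re) (n : ℕ) {N x : ℝ}
    (hN : (n : ℝ) + 2 + |a.im| ≤ N) (hx : N ≤ x) :
    ‖log (a + I * x)‖ ^ (n + 1) ≤
      ‖log (a + I * N)‖ ^ (n + 1) * Real.exp (3 / 2 * (x - N)) := by
  set L := ‖log (a + I * N)‖
  have hn : (0 : ℝ) ≤ n := n.cast_nonneg
  have hL : 2 / 3 < L := two_div_three_lt_norm_log (by linarith [le_norm_add_I_mul hN])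
  have hlip : ‖log (a + I * x)‖ ≤ L + (x - N) / (n + 2) :=
    norm_log_add_I_mul_le ha (by positivity) hx
      (fun t ht => le_norm_add_I_mul (hN.trans ht.1))
  -- `(n + 1) / ((n + 2) L) ≤ 3 / 2` because `L > 2/3`
  have hexponent : (n + 1 : ℕ) * ((x - N) / (n + 2)) / L ≤ 3 / 2 * (x - N) := by
    rw [div_le_iff₀ (by linarith), mul_div_assoc', div_le_iff₀ (by positivity)]
    push_cast
    nlinarith [mul_nonneg (sub_nonneg.2 hx) (sub_nonneg.2 hn), sub_nonneg.2 hx]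
  calc ‖log (a + I * x)‖ ^ (n + 1) ≤ (L + (x - N) / (n + 2)) ^ (n + 1) := by gcongr
    _ ≤ L ^ (n + 1) * Real.exp ((n + 1 : ℕ) * ((x - N) / (n + 2)) / L) :=
        add_pow_le_pow_mul_exp (by linarith) (div_nonneg (by linarith) (by positivity)) _
    _ ≤ L ^ (n + 1) * Real.exp (3 / 2 * (x - N)) := by gcongr

lemma norm_log_pow_div_cosh_sq_le {a : ℂ} (ha : 0 < a.re) (n : ℕ) {N x : ℝ}
    (hN : (n : ℝ) + 2 + |a.im| ≤ N) (hx : N ≤ x) :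
    ‖log (a + I * x) ^ (n + 1) / (Real.cosh (π * x) : ℂ) ^ 2‖ ≤
      4 * ‖log (a + I * N)‖ ^ (n + 1) * Real.exp (-(3 / 2) * N) *
        Real.exp (-(2 * π - 3 / 2) * x) := by
  set B := ‖log (a + I * N)‖ ^ (n + 1) * Real.exp (-(3 / 2) * N) *
    Real.exp (-(2 * π - 3 / 2) * x)
  rw [norm_div, norm_pow, norm_pow, norm_real, norm_eq_abs, abs_of_pos (Real.cosh_pos _),
    div_le_iff₀ (by positivity)]
  calc ‖log (a + I * x)‖ ^ (n + 1)
      ≤ ‖log (a + I * N)‖ ^ (n + 1) * Real.exp (3 / 2 * (x - N)) :=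
        norm_log_add_I_mul_pow_le ha n hN hx
    _ = B * Real.exp (2 * (π * x)) := by
        rw [mul_assoc, mul_assoc, ← Real.exp_add, ← Real.exp_add]; ring_nf
    _ ≤ B * (4 * Real.cosh (π * x) ^ 2) := by
        gcongr; exact Real.exp_two_mul_le_four_mul_cosh_sq _
    _ = _ := by ring

end Complex

/-- Tail bound: for `a ∈ ℂ` with `Re a > 0`, `n ∈ ℕ` and real `N ≥ n + 2 + |Im a|`,
`‖∫_N^∞ log^{n+1}(a+ix)/cosh²(πx) dx‖ < 0.934 e^{−2πN} ‖log(a+Ni)‖^{n+1}`. -/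
theorem stieltjes_tail_bound (a : ℂ) (ha : 0 < a.re) (n : ℕ) (N : ℝ)
    (hN : (n : ℝ) + 2 + |a.im| ≤ N) :
    ‖∫ x in Set.Ioi N,
        (Complex.log (a + Complex.I * x)) ^ (n + 1) / ((Real.cosh (Real.pi * x) : ℂ)) ^ 2‖
      < 0.934 * Real.exp (-(2 * Real.pi * N)) *
          ‖Complex.log (a + (N : ℂ) * Complex.I)‖ ^ (n + 1) := by
  rw [mul_comm (N : ℂ)]
  set L := ‖log (a + I * N)‖
  have hL : 0 < L := by
    linarith [two_div_three_lt_norm_log (z := a + I * N)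
      (by linarith [le_norm_add_I_mul hN, n.cast_nonneg (α := ℝ)])]
  have hk : 0 < 2 * π - 3 / 2 := by linarith [pi_gt_three]
  calc _ ≤ 4 * L ^ (n + 1) * Real.exp (-(3 / 2) * N) * Real.exp (-(2 * π - 3 / 2) * N) /
          (2 * π - 3 / 2) :=
        norm_setIntegral_Ioi_le_of_norm_le_mul_exp hk
          fun x hx => norm_log_pow_div_cosh_sq_le ha n hN hx.le
    _ = 4 / (2 * π - 3 / 2) * Real.exp (-(2 * π * N)) * L ^ (n + 1) := by
        rw [mul_assoc (4 * L ^ (n + 1)), ← Real.exp_add]; ring_nf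
    _ < 0.934 * Real.exp (-(2 * π * N)) * L ^ (n + 1) := by
        gcongr
        rw [div_lt_iff₀ hk]
        linarith [pi_gt_three]
end

section
/- Fix n ∈ ℕ and a ∈ ℂ, and define g(u) = (n+1)·log(log(a + iu)) − 2πu, g'(u) = i(n+1)/((a+iu)·log(a+iu)) − 2π, and g''(u) = (n+1)·(1 + 1/log(a+iu)) / ((a+iu)² · log(a+iu)). Let m ∈ ℂ, r > 0, and G ≥ 0, and suppose that for every u in the closed disk of center m and radius r: Re(u) ≥ 1, a + iu is not a nonpositive real number, log(a + iu) is not a nonpositive real number, and ‖g''(u)‖ ≤ G. Then for every z in this closed disk, ‖(log(a + iz))^{n+1} / cosh²(πz)‖ < 4.015 · ‖exp(g(m))‖ · exp( ‖g'(m)‖·r + G·r²/2 ). -/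
open Complex Real

/-!
On the disk, `f(z) = log^{n+1}(a+iz) / cosh²(πz)` factors as `exp(g(z)) · (2 / (1 + e^{-2πz}))²`.
Since `Re z ≥ 1`, `|e^{-2πz}| ≤ e^{-2π} < 0.001868`, which bounds the second factor by `4.015`.
The first factor is controlled by the second-order Taylor bound
`|g(z) - g(m) - g'(m)(z - m)| ≤ G r² / 2`, proved by comparing the remainder along the segment
`[m, z]` with the parabola `t ↦ G |z - m|² t² / 2`.
-/

theorem Convex.norm_sub_sub_smul_deriv_le {E : Type*} [NormedAddCommGroup E] [NormedSpace ℂ E]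
    {f f' f'' : ℂ → E} {s : Set ℂ} {C : ℝ} (hs : Convex ℝ s)
    (hf : ∀ u ∈ s, HasDerivAt f (f' u) u) (hf' : ∀ u ∈ s, HasDerivAt f' (f'' u) u)
    (hC : ∀ u ∈ s, ‖f'' u‖ ≤ C) {x y : ℂ} (hx : x ∈ s) (hy : y ∈ s) :
    ‖f y - f x - (y - x) • f' x‖ ≤ C / 2 * ‖y - x‖ ^ 2 := by
  set p : ℝ → ℂ := fun t => x + t • (y - x)
  have hp : ∀ t, HasDerivAt p (y - x) t := fun t =>
    (((hasDerivAt_id t).smul_const (y - x)).const_add x).congr_deriv (one_smul ℝ _)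
  have hps : ∀ t ∈ Set.Icc (0 : ℝ) 1, p t ∈ s := fun t ht => hs.add_smul_sub_mem hx hy ht
  have hpx : ∀ t : ℝ, 0 ≤ t → ‖p t - x‖ = t * ‖y - x‖ := fun t ht => by
    simp [p, abs_of_nonneg ht]
  set F : ℝ → E := fun t => f (p t) - f x - t • (y - x) • f' x
  have hF : ∀ t ∈ Set.Icc (0 : ℝ) 1, HasDerivAt F ((y - x) • (f' (p t) - f' x)) t := by
    intro t ht
    have := (((hf (p t) (hps t ht)).scomp t (hp t)).sub_const (f x)).sub
      ((hasDerivAt_id t).smul_const ((y - x) • f' x))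
    exact this.congr_deriv (by simp only [smul_sub, one_smul])
  have hB : ∀ t, HasDerivAt (fun t : ℝ => C / 2 * ‖y - x‖ ^ 2 * t ^ 2) (C * ‖y - x‖ ^ 2 * t) t :=
    fun t => ((hasDerivAt_pow 2 t).const_mul (C / 2 * ‖y - x‖ ^ 2)).congr_deriv (by ring)
  have bound : ∀ t ∈ Set.Ico (0 : ℝ) 1, ‖(y - x) • (f' (p t) - f' x)‖ ≤ C * ‖y - x‖ ^ 2 * t := by
    intro t ht
    have hlip := hs.norm_image_sub_le_of_norm_hasDerivWithin_le
      (fun u hu => (hf' u hu).hasDerivWithinAt) hC hx (hps t (Set.Ico_subset_Icc_self ht))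
    rw [norm_smul, hpx t ht.1] at *
    nlinarith [norm_nonneg (y - x)]
  have := image_norm_le_of_norm_deriv_right_le_deriv_boundary
    (fun t ht => (hF t ht).continuousAt.continuousWithinAt)
    (fun t ht => (hF t (Set.Ico_subset_Icc_self ht)).hasDerivWithinAt) (by simp [F, p]) hB bound
    (Set.right_mem_Icc.2 zero_le_one)
  simpa [F, p] using this

theorem Real.exp_neg_two_mul_pi_le : Real.exp (-(2 * π)) ≤ 0.001868 := by
  have h_frac : (1.3273 : ℝ) ≤ Real.exp 0.283184 := by
    have := Real.sum_le_exp_of_nonneg (by norm_num : (0 : ℝ) ≤ 0.283184) 5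
    norm_num [Finset.sum_range_succ, Nat.factorial] at this
    linarith
  have h_int : (2.7182818283 : ℝ) ^ 6 ≤ Real.exp 6 := by
    rw [show (6 : ℝ) = (6 : ℕ) * 1 by norm_num, Real.exp_nat_mul]
    exact pow_le_pow_left₀ (by norm_num) Real.exp_one_gt_d9.le 6
  have h_two_pi : (535.4 : ℝ) ≤ Real.exp (2 * π) := calc
    (535.4 : ℝ) ≤ 2.7182818283 ^ 6 * 1.3273 := by norm_num
    _ ≤ Real.exp 6 * Real.exp 0.283184 := by gcongr
    _ ≤ Real.exp (2 * π) := by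
      rw [← Real.exp_add]; exact Real.exp_le_exp.2 (by linarith [Real.pi_gt_d6])
  rw [Real.exp_neg, inv_le_comm₀ (by positivity) (by norm_num)]
  exact le_trans (by norm_num) h_two_pi

theorem Complex.norm_exp_neg_two_pi_mul_le {z : ℂ} (hz : 1 ≤ z.re) :
    ‖exp (-(2 * π * z))‖ ≤ 0.001868 := by
  refine le_trans ?_ Real.exp_neg_two_mul_pi_le
  rw [norm_exp]
  gcongr
  rw [neg_re, show 2 * (π : ℂ) * z = ((2 * π : ℝ) : ℂ) * z by push_cast; ring, re_ofReal_mul]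
  nlinarith [Real.pi_pos]

theorem Complex.norm_two_div_one_add_sq_lt {E : ℂ} (hE : ‖E‖ ≤ 0.001868) :
    ‖(2 / (1 + E)) ^ 2‖ < 4.015 := by
  have h_lower : (0.998132 : ℝ) ≤ ‖1 + E‖ := by
    have := norm_sub_norm_le (1 : ℂ) (-E)
    rw [norm_neg, sub_neg_eq_add, norm_one] at this
    linarith
  rw [norm_pow, norm_div, Complex.norm_two]
  calc (2 / ‖1 + E‖) ^ 2 ≤ (2 / 0.998132) ^ 2 := by gcongr
    _ < 4.015 := by norm_num

theorem Complex.cosh_eq_exp_mul_one_add_exp (w : ℂ) :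
    cosh w = exp w * (1 + exp (-(2 * w))) / 2 := by
  rw [cosh, mul_add, mul_one, ← exp_add]
  ring_nf

theorem Complex.pow_div_cosh_sq_eq_exp_mul {L : ℂ} (hL : L ≠ 0) (k : ℕ) (w : ℂ) :
    L ^ k / cosh w ^ 2 = exp (k * log L - 2 * w) * (2 / (1 + exp (-(2 * w)))) ^ 2 := by
  rw [cosh_eq_exp_mul_one_add_exp, exp_sub, exp_nat_mul, exp_log hL,
    show 2 * w = w + w by ring, exp_add]
  simp only [div_eq_mul_inv, mul_pow, inv_pow, mul_inv]
  ring

theorem Complex.norm_exp_le_norm_exp_mul_exp_norm_sub (v w : ℂ) :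
    ‖exp w‖ ≤ ‖exp v‖ * Real.exp ‖w - v‖ := by
  rw [norm_exp, norm_exp, ← Real.exp_add]
  gcongr
  linarith [re_le_norm (w - v), sub_re w v]

namespace SaddlePoint

variable (n : ℕ) (a : ℂ)

noncomputable def phase (u : ℂ) : ℂ :=
  ((n : ℂ) + 1) * Complex.log (Complex.log (a + I * u)) - 2 * π * u

noncomputable def phaseDeriv (u : ℂ) : ℂ :=
  I * ((n : ℂ) + 1) / ((a + I * u) * Complex.log (a + I * u)) - 2 * π

noncomputable def phaseDeriv2 (u : ℂ) : ℂ :=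
  ((n : ℂ) + 1) * (1 + 1 / Complex.log (a + I * u)) / ((a + I * u) ^ 2 * Complex.log (a + I * u))

variable {n a}

theorem hasDerivAt_add_I_mul (u : ℂ) : HasDerivAt (fun v => a + I * v) I u := by
  simpa using ((hasDerivAt_id u).const_mul I).const_add a

theorem hasDerivAt_phase {u : ℂ} (hw : a + I * u ∈ slitPlane)
    (hL : Complex.log (a + I * u) ∈ slitPlane) :
    HasDerivAt (phase n a) (phaseDeriv n a u) u := by
  have := (((hasDerivAt_add_I_mul u).clog hw).clog hL |>.const_mul ((n : ℂ) + 1)).sub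
    ((hasDerivAt_id u).const_mul (2 * (π : ℂ)))
  refine this.congr_deriv ?_
  have := slitPlane_ne_zero hw
  have := slitPlane_ne_zero hL
  simp only [phaseDeriv]
  field_simp

theorem hasDerivAt_phaseDeriv {u : ℂ} (hw : a + I * u ∈ slitPlane)
    (hL : Complex.log (a + I * u) ∈ slitPlane) :
    HasDerivAt (phaseDeriv n a) (phaseDeriv2 n a u) u := by
  have hw0 := slitPlane_ne_zero hw
  have hL0 := slitPlane_ne_zero hL
  have hlin := hasDerivAt_add_I_mul (a := a) u
  have := ((hasDerivAt_const u (I * ((n : ℂ) + 1))).div (hlin.mul (hlin.clog hw))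
    (mul_ne_zero hw0 hL0)).sub_const (2 * (π : ℂ))
  refine this.congr_deriv ?_
  simp only [phaseDeriv2, Pi.mul_apply]
  field_simp
  rw [I_sq]
  ring

end SaddlePoint

open SaddlePoint in
theorem saddle_point_integrand_bound_general (n : ℕ) (a m : ℂ) (r G : ℝ)
    (h : ∀ u ∈ Metric.closedBall m r,
      1 ≤ u.re ∧
      (a + Complex.I * u) ∈ Complex.slitPlane ∧
      Complex.log (a + Complex.I * u) ∈ Complex.slitPlane ∧
      ‖((n : ℂ) + 1) * (1 + 1 / Complex.log (a + Complex.I * u)) /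
          ((a + Complex.I * u) ^ 2 * Complex.log (a + Complex.I * u))‖ ≤ G) :
    ∀ z ∈ Metric.closedBall m r,
      ‖(Complex.log (a + Complex.I * z)) ^ (n + 1) / (Complex.cosh (Real.pi * z)) ^ 2‖
        < 4.015 *
            ‖Complex.exp (((n : ℂ) + 1) * Complex.log (Complex.log (a + Complex.I * m)) -
              2 * Real.pi * m)‖ *
            Real.exp
              (‖Complex.I * ((n : ℂ) + 1) /
                  ((a + Complex.I * m) * Complex.log (a + Complex.I * m)) -
                  2 * Real.pi‖ * r + G * r ^ 2 / 2) := by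
  intro z hz
  have hm : m ∈ Metric.closedBall m r := Metric.mem_closedBall_self (dist_nonneg.trans hz)
  have hzm : ‖z - m‖ ≤ r := mem_closedBall_iff_norm.1 hz
  have hG : 0 ≤ G := (norm_nonneg _).trans (h m hm).2.2.2
  obtain ⟨hz_re, -, hz_log, -⟩ := h z hz
  have h_taylor : ‖phase n a z - phase n a m - (z - m) * phaseDeriv n a m‖ ≤ G / 2 * ‖z - m‖ ^ 2 :=
    (convex_closedBall m r).norm_sub_sub_smul_deriv_le
      (fun u hu => hasDerivAt_phase (h u hu).2.1 (h u hu).2.2.1)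
      (fun u hu => hasDerivAt_phaseDeriv (h u hu).2.1 (h u hu).2.2.1)
      (fun u hu => (h u hu).2.2.2) hm hz
  have h_phase : ‖phase n a z - phase n a m‖ ≤ ‖phaseDeriv n a m‖ * r + G * r ^ 2 / 2 := calc
    _ ≤ ‖phase n a z - phase n a m - (z - m) * phaseDeriv n a m‖ + ‖z - m‖ * ‖phaseDeriv n a m‖ :=
      norm_mul (z - m) _ ▸ norm_le_norm_sub_add _ _
    _ ≤ G / 2 * r ^ 2 + r * ‖phaseDeriv n a m‖ := by gcongr; exact h_taylor.trans (by gcongr)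
    _ = _ := by ring
  have h_factor := norm_two_div_one_add_sq_lt (norm_exp_neg_two_pi_mul_le hz_re)
  have h_eq := pow_div_cosh_sq_eq_exp_mul (slitPlane_ne_zero hz_log) (n + 1) (π * z)
  push_cast [← mul_assoc] at h_eq
  rw [h_eq, norm_mul]
  change ‖exp (phase n a z)‖ * _ <
    4.015 * ‖exp (phase n a m)‖ * Real.exp (‖phaseDeriv n a m‖ * r + G * r ^ 2 / 2)
  calc _ < ‖exp (phase n a z)‖ * 4.015 := by gcongr; exact norm_pos_iff.2 (Complex.exp_ne_zero _)
    _ ≤ ‖exp (phase n a m)‖ * Real.exp ‖phase n a z - phase n a m‖ * 4.015 := by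
      gcongr; exact norm_exp_le_norm_exp_mul_exp_norm_sub _ _
    _ ≤ _ := by
      rw [mul_comm _ (4.015 : ℝ), ← mul_assoc]
      gcongr

/-- Saddle-point bound: with `g(u) = (n+1) log(log(a+iu)) − 2πu`,
`g'(u) = i(n+1)/((a+iu) log(a+iu)) − 2π` and
`g''(u) = (n+1)(1 + 1/log(a+iu))/((a+iu)² log(a+iu))`, if on the closed disk of center `m`
and radius `r` we have `Re u ≥ 1`, `a+iu` and `log(a+iu)` avoid the nonpositive real axis,
and `‖g''(u)‖ ≤ G`, then for every `z` in the disk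
`‖log^{n+1}(a+iz)/cosh²(πz)‖ < 4.015 ‖exp(g(m))‖ exp(‖g'(m)‖ r + G r²/2)`. -/
theorem saddle_point_integrand_bound (n : ℕ) (a m : ℂ) (r G : ℝ) (hr : 0 < r) (hG : 0 ≤ G)
    (h : ∀ u ∈ Metric.closedBall m r,
      1 ≤ u.re ∧
      (a + Complex.I * u) ∈ Complex.slitPlane ∧
      Complex.log (a + Complex.I * u) ∈ Complex.slitPlane ∧
      ‖((n : ℂ) + 1) * (1 + 1 / Complex.log (a + Complex.I * u)) /
          ((a + Complex.I * u) ^ 2 * Complex.log (a + Complex.I * u))‖ ≤ G) :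
    ∀ z ∈ Metric.closedBall m r,
      ‖(Complex.log (a + Complex.I * z)) ^ (n + 1) / (Complex.cosh (Real.pi * z)) ^ 2‖
        < 4.015 *
            ‖Complex.exp (((n : ℂ) + 1) * Complex.log (Complex.log (a + Complex.I * m)) -
              2 * Real.pi * m)‖ *
            Real.exp
              (‖Complex.I * ((n : ℂ) + 1) /
                  ((a + Complex.I * m) * Complex.log (a + Complex.I * m)) -
                  2 * Real.pi‖ * r + G * r ^ 2 / 2) :=
  saddle_point_integrand_bound_general n a m r G h
end

section
/- For every z ∈ ℂ with Re(z) ≥ 1, one has ‖(1 + tanh(πz))²‖ < 4.015. -/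
/-!
Since `1 + tanh w = 2 / (1 + exp (-2w))`, the reverse triangle inequality gives
`‖1 + tanh w‖ ≤ 2 / (1 - exp (-2 Re w))` whenever `Re w > 0`. For `w = πz` with `Re z ≥ 1` this is
at most `2 / (1 - 1/535)` because `exp (2π) > 535`, and `(2 / (1 - 1/535))² = (1070/534)² < 4.015`.
The bound is nearly sharp (equality in the triangle inequality occurs on `Re z = 1`), so
`exp (2π)` has to be estimated to about three significant digits.
-/

open Complex Real

theorem Complex.one_add_tanh_eq (w : ℂ) (h : 1 + cexp (-2 * w) ≠ 0) :
    1 + tanh w = 2 / (1 + cexp (-2 * w)) := by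
  have hc : cexp w * cexp (-2 * w) = cexp (-w) := by rw [← Complex.exp_add]; ring_nf
  have hcosh : cexp w + cexp (-w) ≠ 0 := by
    rw [← hc, ← mul_one_add]; exact mul_ne_zero (Complex.exp_ne_zero w) h
  rw [tanh_eq_sinh_div_cosh, Complex.sinh, Complex.cosh, div_div_div_cancel_right₀ two_ne_zero]
  set c := cexp (-2 * w)
  field_simp
  linear_combination 2 * hc

theorem Complex.norm_one_add_tanh_le {w : ℂ} (hw : 0 < w.re) :
    ‖1 + tanh w‖ ≤ 2 / (1 - rexp (-2 * w.re)) := by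
  have hnorm : ‖cexp (-2 * w)‖ = rexp (-2 * w.re) := by simp [Complex.norm_exp]
  have hlt : rexp (-2 * w.re) < 1 := Real.exp_lt_one_iff.mpr (by linarith)
  have hlower : 1 - rexp (-2 * w.re) ≤ ‖1 + cexp (-2 * w)‖ := by
    rw [← hnorm, ← norm_one (α := ℂ)]
    simpa using norm_sub_norm_le (1 : ℂ) (-cexp (-2 * w))
  have hne : 1 + cexp (-2 * w) ≠ 0 := norm_pos_iff.mp (by linarith)
  rw [one_add_tanh_eq w hne, norm_div, Complex.norm_ofNat]
  exact div_le_div_of_nonneg_left zero_le_two (by linarith) hlower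

theorem Real.lt_exp_two_pi : 535 < rexp (2 * π) := by
  have htaylor : 1 + 0.283 + 0.283 ^ 2 / 2 + 0.283 ^ 3 / 6 ≤ rexp 0.283 := by
    simpa [Finset.sum_range_succ, Nat.factorial] using
      Real.sum_le_exp_of_nonneg (x := 0.283) (by norm_num) 4
  have he6 : 2.7182818283 ^ 6 < rexp 1 ^ 6 :=
    pow_lt_pow_left₀ exp_one_gt_d9 (by norm_num) (by norm_num)
  calc (535 : ℝ) < 2.7182818283 ^ 6 * (1 + 0.283 + 0.283 ^ 2 / 2 + 0.283 ^ 3 / 6) := by norm_num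
    _ ≤ rexp 1 ^ 6 * rexp 0.283 := by gcongr
    _ = rexp 6.283 := by rw [← Real.exp_nat_mul, ← Real.exp_add]; norm_num
    _ < rexp (2 * π) := Real.exp_lt_exp.mpr (by linarith [pi_gt_d4])

/-- For every `z ∈ ℂ` with `Re z ≥ 1`, `‖(1 + tanh(πz))²‖ < 4.015`. -/
theorem one_add_tanh_sq_bound (z : ℂ) (hz : 1 ≤ z.re) :
    ‖(1 + Complex.tanh (Real.pi * z)) ^ 2‖ < 4.015 := by
  have hre : (↑π * z).re = π * z.re := by simp
  have hq : rexp (-2 * (π * z.re)) < 1 / 535 :=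
    calc rexp (-2 * (π * z.re)) ≤ rexp (-(2 * π)) := Real.exp_le_exp.mpr (by nlinarith [pi_pos])
      _ = 1 / rexp (2 * π) := by rw [Real.exp_neg, one_div]
      _ < 1 / 535 := one_div_lt_one_div_of_lt (by norm_num) lt_exp_two_pi
  have hbound := norm_one_add_tanh_le (w := ↑π * z) (by rw [hre]; nlinarith [pi_pos])
  rw [hre] at hbound
  have hpos : 0 < 1 - rexp (-2 * (π * z.re)) := by linarith
  calc ‖(1 + tanh (↑π * z)) ^ 2‖ = ‖1 + tanh (↑π * z)‖ ^ 2 := norm_pow _ _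
    _ ≤ (2 / (1 - rexp (-2 * (π * z.re)))) ^ 2 := by gcongr
    _ ≤ (2 / (1 - 1 / 535)) ^ 2 := by gcongr
    _ < 4.015 := by norm_num
end
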